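/- arXiv:1404.4805 — 5 statements merged into one kernel-verified Lean document; each statement's English description precedes it below -/
import Mathlib

section
/- Let g : ℝ^N → ℝ ∪ {+∞} be proper lower semicontinuous convex, y, z ∈ ℝ^N fixed. Define for α > 0 the quantity p_g(α) = (1/α)‖prox_{αg}(y - αz) - y‖, where prox_{αg}(w) = argmin_x (‖x - w‖²/2 + α g(x)). Then p_g is a non-increasing function of α on (0, ∞). -/
/-!
Writing `q α = P α - y`, the optimality condition of the prox problem says that
`α⁻¹ • (y - α • z - P α) = -α⁻¹ • q α - z` is a subgradient of `g` at `P α`. Monotonicity of the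
subdifferential (the `z` terms cancel) gives `0 ≤ ⟪α₂⁻¹ • q₂ - α₁⁻¹ • q₁, q₁ - q₂⟫`, and with
Cauchy–Schwarz this becomes `(‖q₁‖ - ‖q₂‖) (α₂ ‖q₁‖ - α₁ ‖q₂‖) ≤ 0`, which for `α₁ ≤ α₂` forces
`α₁ ‖q₂‖ ≤ α₂ ‖q₁‖`.
-/

open RealInnerProductSpace

variable {N : ℕ}

/-- `p` is the proximal point of `g` with parameter `α > 0` at `w`, i.e. a minimizer of
`x ↦ ‖x - w‖²/2 + α g x`. -/
def IsProxPt (g : EuclideanSpace ℝ (Fin N) → EReal) (α : ℝ)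
    (w p : EuclideanSpace ℝ (Fin N)) : Prop :=
  ∀ x, ((‖p - w‖ ^ 2 / 2 : ℝ) : EReal) + (α : EReal) * g p
      ≤ ((‖x - w‖ ^ 2 / 2 : ℝ) : EReal) + (α : EReal) * g x

open Filter Topology

lemma le_of_forall_le_add_mul {X Y C : ℝ} (h : ∀ t : ℝ, 0 < t → t ≤ 1 → X ≤ Y + t * C) :
    X ≤ Y := by
  have hlim : Tendsto (fun t : ℝ => Y + t * C) (𝓝[>] 0) (𝓝 Y) :=
    (Continuous.tendsto' (by fun_prop) 0 Y (by simp)).mono_left nhdsWithin_le_nhds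
  refine ge_of_tendsto hlim ?_
  filter_upwards [Ioc_mem_nhdsGT one_pos] with t ht using h t ht.1 ht.2

lemma inv_mul_norm_le_of_inner_nonneg {E : Type*} [NormedAddCommGroup E] [InnerProductSpace ℝ E]
    {s t : ℝ} (hs : 0 < s) (hst : s ≤ t) {A B : E} (h : 0 ≤ ⟪t⁻¹ • B - s⁻¹ • A, A - B⟫) :
    t⁻¹ * ‖B‖ ≤ s⁻¹ * ‖A‖ := by
  have ht : 0 < t := hs.trans_le hst
  have hquad : s * ‖B‖ ^ 2 + t * ‖A‖ ^ 2 ≤ (s + t) * (‖A‖ * ‖B‖) := by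
    have hcs : ⟪B, A⟫ ≤ ‖A‖ * ‖B‖ := (real_inner_le_norm B A).trans_eq (mul_comm _ _)
    rw [inner_sub_left, inner_sub_right, inner_sub_right, real_inner_smul_left,
      real_inner_smul_left, real_inner_smul_left, real_inner_smul_left, real_inner_self_eq_norm_sq,
      real_inner_self_eq_norm_sq, real_inner_comm B A] at h
    have := mul_nonneg (mul_pos hs ht).le h
    field_simp at this
    nlinarith
  have hlin : s * ‖B‖ ≤ t * ‖A‖ := by
    by_contra! hcon
    have hAB : ‖A‖ < ‖B‖ := by nlinarith [norm_nonneg A]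
    nlinarith [norm_nonneg A, norm_nonneg B]
  rw [inv_mul_eq_div, inv_mul_eq_div, div_le_div_iff₀ ht hs]
  linarith

namespace IsProxPt

variable {g : EuclideanSpace ℝ (Fin N) → EReal} {α : ℝ} {w p : EuclideanSpace ℝ (Fin N)}

lemma ne_top (hp : IsProxPt g α w p) (hα : 0 < α) {x : EuclideanSpace ℝ (Fin N)}
    (hx : g x ≠ ⊤) (hx' : g x ≠ ⊥) : g p ≠ ⊤ := by
  intro htop
  have hmin := hp x
  rw [htop, EReal.coe_mul_top_of_pos hα, EReal.add_top_of_ne_bot (EReal.coe_ne_bot _),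
    top_le_iff, ← EReal.coe_toReal hx hx'] at hmin
  exact EReal.coe_ne_top _ (by exact_mod_cast hmin)

/-- `α⁻¹ • (w - p)` is a subgradient of `g` at `p`. -/
lemma inner_le (hp : IsProxPt g α w p)
    (hconv : ∀ (x y : EuclideanSpace ℝ (Fin N)) (a b : ℝ), 0 ≤ a → 0 ≤ b → a + b = 1 →
      g (a • x + b • y) ≤ (a : EReal) * g x + (b : EReal) * g y)
    (hα : 0 < α) {q : EuclideanSpace ℝ (Fin N)} {a b : ℝ} (ha : g p = a) (hb : g q = b) :
    ⟪α⁻¹ • (w - p), q - p⟫ ≤ b - a := by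
  rw [real_inner_smul_left, inv_mul_le_iff₀ hα]
  refine le_of_forall_le_add_mul (C := ‖q - p‖ ^ 2 / 2) fun t ht₀ ht₁ => ?_
  have hseg : g ((1 - t) • p + t • q) ≤ (((1 - t) * a + t * b : ℝ) : EReal) := by
    have := hconv p q (1 - t) t (by linarith) ht₀.le (by ring)
    rwa [ha, hb, ← EReal.coe_mul, ← EReal.coe_mul, ← EReal.coe_add] at this
  have hmin : ‖p - w‖ ^ 2 / 2 + α * a ≤
      ‖(1 - t) • p + t • q - w‖ ^ 2 / 2 + α * ((1 - t) * a + t * b) := by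
    have := (hp _).trans (add_le_add le_rfl
      (mul_le_mul_of_nonneg_left hseg (EReal.coe_nonneg.mpr hα.le)))
    rw [ha] at this
    exact_mod_cast this
  have hexpand : ‖(1 - t) • p + t • q - w‖ ^ 2 =
      ‖p - w‖ ^ 2 + 2 * (t * ⟪p - w, q - p⟫) + t ^ 2 * ‖q - p‖ ^ 2 := by
    rw [show (1 - t) • p + t • q - w = (p - w) + t • (q - p) by module, norm_add_sq_real,
      real_inner_smul_right, norm_smul, mul_pow, Real.norm_eq_abs, sq_abs]
  rw [hexpand] at hmin
  have hpw : ⟪w - p, q - p⟫ = -⟪p - w, q - p⟫ := by rw [← inner_neg_left, neg_sub]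
  rw [hpw]
  nlinarith

/-- Monotonicity of the subdifferential of `g`. -/
lemma inner_sub_nonneg {α' : ℝ} {w' p' : EuclideanSpace ℝ (Fin N)}
    (hp : IsProxPt g α w p) (hp' : IsProxPt g α' w' p')
    (hconv : ∀ (x y : EuclideanSpace ℝ (Fin N)) (a b : ℝ), 0 ≤ a → 0 ≤ b → a + b = 1 →
      g (a • x + b • y) ≤ (a : EReal) * g x + (b : EReal) * g y)
    (hα : 0 < α) (hα' : 0 < α') (hpt : g p ≠ ⊤) (hpb : g p ≠ ⊥) (hpt' : g p' ≠ ⊤)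
    (hpb' : g p' ≠ ⊥) :
    0 ≤ ⟪α⁻¹ • (w - p) - α'⁻¹ • (w' - p'), p - p'⟫ := by
  have h := hp.inner_le hconv hα (EReal.coe_toReal hpt hpb).symm (EReal.coe_toReal hpt' hpb').symm
  have h' := hp'.inner_le hconv hα' (EReal.coe_toReal hpt' hpb').symm
    (EReal.coe_toReal hpt hpb).symm
  rw [← neg_sub p p', inner_neg_right] at h
  rw [inner_sub_left]
  linarith

end IsProxPt

theorem prox_residual_div_antitone_general
    (g : EuclideanSpace ℝ (Fin N) → EReal)
    (hproper : ∃ z, g z ≠ ⊤) (hnobot : ∀ z, g z ≠ ⊥)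
    (hconv : ∀ (x y : EuclideanSpace ℝ (Fin N)) (a b : ℝ), 0 ≤ a → 0 ≤ b → a + b = 1 →
      g (a • x + b • y) ≤ (a : EReal) * g x + (b : EReal) * g y)
    (y z : EuclideanSpace ℝ (Fin N))
    (P : ℝ → EuclideanSpace ℝ (Fin N))
    (hP : ∀ α, 0 < α → IsProxPt g α (y - α • z) (P α))
    (α₁ α₂ : ℝ) (h₁ : 0 < α₁) (h₁₂ : α₁ ≤ α₂) :
    (1 / α₂) * ‖P α₂ - y‖ ≤ (1 / α₁) * ‖P α₁ - y‖ := by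
  have h₂ : 0 < α₂ := h₁.trans_le h₁₂
  obtain ⟨x₀, hx₀⟩ := hproper
  have hfin : ∀ α, 0 < α → g (P α) ≠ ⊤ := fun α hα => (hP α hα).ne_top hα hx₀ (hnobot x₀)
  have hmono := (hP α₁ h₁).inner_sub_nonneg (hP α₂ h₂) hconv h₁ h₂ (hfin α₁ h₁) (hnobot _)
    (hfin α₂ h₂) (hnobot _)
  have hres : ∀ α ≠ 0, α⁻¹ • (y - α • z - P α) = -(α⁻¹ • (P α - y)) - z := by
    intro α hα
    rw [smul_sub, smul_sub, inv_smul_smul₀ hα]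
    module
  rw [hres α₁ h₁.ne', hres α₂ h₂.ne'] at hmono
  simpa only [one_div] using inv_mul_norm_le_of_inner_nonneg h₁ h₁₂
    (by convert hmono using 2 <;> abel)

/-- **Proximal monotonicity (decreasing part).** For proper lsc convex `g` and fixed `y, z`,
the map `α ↦ (1/α)‖prox_{αg}(y - αz) - y‖` is non-increasing on `(0, ∞)`. -/
theorem prox_residual_div_antitone
    (g : EuclideanSpace ℝ (Fin N) → EReal)
    (hproper : ∃ z, g z ≠ ⊤) (hnobot : ∀ z, g z ≠ ⊥)
    (hlsc : LowerSemicontinuous g)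
    (hconv : ∀ (x y : EuclideanSpace ℝ (Fin N)) (a b : ℝ), 0 ≤ a → 0 ≤ b → a + b = 1 →
      g (a • x + b • y) ≤ (a : EReal) * g x + (b : EReal) * g y)
    (y z : EuclideanSpace ℝ (Fin N))
    (P : ℝ → EuclideanSpace ℝ (Fin N))
    (hP : ∀ α, 0 < α → IsProxPt g α (y - α • z) (P α))
    (α₁ α₂ : ℝ) (h₁ : 0 < α₁) (h₁₂ : α₁ ≤ α₂) :
    (1 / α₂) * ‖P α₂ - y‖ ≤ (1 / α₁) * ‖P α₁ - y‖ :=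
  prox_residual_div_antitone_general g hproper hnobot hconv y z P hP α₁ α₂ h₁ h₁₂
end

section
/- Let L_n > 0, c₁ > 0, c₂ > 0 with c₁ and c₂ sufficiently small, and let δ_{n-1} ≥ c₂ be given. Set b = (δ_{n-1} + L_n/2)/(c₂ + L_n/2). Then b ≥ 1, and any β_n ∈ [0, 1) satisfying β_n ≤ (b - 1)/(b - 1/2) admits a step size α_n > 0 with (1 - β_n/2)/(δ_{n-1} + L_n/2) ≤ α_n ≤ (1 - β_n)/(c₂ + L_n/2); for such α_n, setting δ_n = 1/α_n - L_n/2 - β_n/(2α_n) and γ_n = 1/α_n - L_n/2 - β_n/α_n, one has δ_n ≤ δ_{n-1}, γ_n ≥ c₂, and δ_n ≥ γ_n. -/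
/-!
With `α > 0`, the conditions `δ_n ≤ δ_{n-1}` and `γ_n ≥ c₂` are equivalent to the lower and upper
bound on `α_n` respectively, so all that has to be shown is that the interval of admissible step
sizes is non-empty. Writing `D₁ = δ_{n-1} + L_n/2` and `D₂ = c₂ + L_n/2`, so that `b = D₁/D₂`,
that is `(1 - β/2) D₂ ≤ (1 - β) D₁`, which is the condition `β (b - 1/2) ≤ b - 1` multiplied
by `D₂`.
-/

namespace IPiano

/-- The paper's `δ_n`. -/
noncomputable def delta (L α β : ℝ) : ℝ := 1 / α - L / 2 - β / (2 * α)

/-- The paper's `γ_n`. -/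
noncomputable def gamma (L α β : ℝ) : ℝ := 1 / α - L / 2 - β / α

variable {L α β : ℝ}

theorem delta_eq (hα : α ≠ 0) : delta L α β = (1 - β / 2) / α - L / 2 := by
  unfold delta
  field_simp
  ring

theorem gamma_eq (hα : α ≠ 0) : gamma L α β = (1 - β) / α - L / 2 := by
  unfold gamma
  field_simp
  ring

theorem delta_le_iff {δ : ℝ} (hα : 0 < α) (hD : 0 < δ + L / 2) :
    delta L α β ≤ δ ↔ (1 - β / 2) / (δ + L / 2) ≤ α := by
  rw [delta_eq hα.ne', sub_le_iff_le_add, div_le_comm₀ hα hD]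

theorem le_gamma_iff {c : ℝ} (hα : 0 < α) (hD : 0 < c + L / 2) :
    c ≤ gamma L α β ↔ α ≤ (1 - β) / (c + L / 2) := by
  rw [gamma_eq hα.ne', le_sub_iff_add_le, le_div_comm₀ hD hα]

theorem gamma_le_delta (hα : 0 < α) (hβ : 0 ≤ β) : gamma L α β ≤ delta L α β := by
  rw [gamma_eq hα.ne', delta_eq hα.ne']
  gcongr
  linarith

theorem one_sub_half_div_le_one_sub_div {D₁ D₂ : ℝ} (hD₂ : 0 < D₂) (hD : D₂ ≤ D₁)
    (hβ : β ≤ (D₁ / D₂ - 1) / (D₁ / D₂ - 1 / 2)) :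
    (1 - β / 2) / D₁ ≤ (1 - β) / D₂ := by
  have hb : 1 ≤ D₁ / D₂ := (one_le_div hD₂).mpr hD
  have hβb : β * (D₁ / D₂ - 1 / 2) ≤ D₁ / D₂ - 1 := (le_div_iff₀ (by linarith)).mp hβ
  have hβD : β * (D₁ - D₂ / 2) ≤ D₁ - D₂ := by
    have hbD : D₁ / D₂ * D₂ = D₁ := div_mul_cancel₀ _ hD₂.ne'
    nlinarith [mul_le_mul_of_nonneg_right hβb hD₂.le]
  rw [div_le_div_iff₀ (by linarith) hD₂]
  linarith

end IPiano

open IPiano in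
theorem ipiano_step_size_feasibility_general (L c₂ δprev b : ℝ)
    (hL : 0 < L) (hc₂ : 0 < c₂) (hδ : c₂ ≤ δprev)
    (hb : b = (δprev + L / 2) / (c₂ + L / 2)) :
    1 ≤ b ∧
    ∀ β : ℝ, 0 ≤ β → β < 1 → β ≤ (b - 1) / (b - 1 / 2) →
      ((∃ α : ℝ, 0 < α ∧ (1 - β / 2) / (δprev + L / 2) ≤ α ∧ α ≤ (1 - β) / (c₂ + L / 2)) ∧
       ∀ α : ℝ, 0 < α → (1 - β / 2) / (δprev + L / 2) ≤ α → α ≤ (1 - β) / (c₂ + L / 2) →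
         (1 / α - L / 2 - β / (2 * α) ≤ δprev ∧
          c₂ ≤ 1 / α - L / 2 - β / α ∧
          1 / α - L / 2 - β / α ≤ 1 / α - L / 2 - β / (2 * α))) := by
  have hD₂ : 0 < c₂ + L / 2 := by positivity
  have hD : c₂ + L / 2 ≤ δprev + L / 2 := by linarith
  subst hb
  refine ⟨(one_le_div hD₂).mpr hD, fun β hβ₀ hβ₁ hβb => ⟨?_, fun α hα hlo hhi => ?_⟩⟩
  · exact ⟨(1 - β) / (c₂ + L / 2), div_pos (by linarith) hD₂,
      one_sub_half_div_le_one_sub_div hD₂ hD hβb, le_rfl⟩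
  · exact ⟨(delta_le_iff hα (hD₂.trans_le hD)).mpr hlo, (le_gamma_iff hα hD₂).mpr hhi,
      gamma_le_delta hα hβ₀⟩

/-- **Existence of feasible iPiano step size parameters.** Given `L_n > 0`, `c₂ > 0` and
`δ_{n-1} ≥ c₂`, set `b = (δ_{n-1} + L_n/2)/(c₂ + L_n/2)`. Then `b ≥ 1`, and for any
`β_n ∈ [0, 1)` with `β_n ≤ (b-1)/(b-1/2)` there exists a step size `α_n > 0` with
`(1 - β_n/2)/(δ_{n-1} + L_n/2) ≤ α_n ≤ (1 - β_n)/(c₂ + L_n/2)`; for any such `α_n`,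
the quantities `δ_n = 1/α_n - L_n/2 - β_n/(2α_n)` and `γ_n = 1/α_n - L_n/2 - β_n/α_n`
satisfy `δ_n ≤ δ_{n-1}`, `γ_n ≥ c₂` and `δ_n ≥ γ_n`. -/
theorem ipiano_step_size_feasibility (L c₁ c₂ δprev b : ℝ)
    (hL : 0 < L) (hc₁ : 0 < c₁) (hc₂ : 0 < c₂) (hδ : c₂ ≤ δprev)
    (hb : b = (δprev + L / 2) / (c₂ + L / 2)) :
    1 ≤ b ∧
    ∀ β : ℝ, 0 ≤ β → β < 1 → β ≤ (b - 1) / (b - 1 / 2) →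
      ((∃ α : ℝ, 0 < α ∧ (1 - β / 2) / (δprev + L / 2) ≤ α ∧ α ≤ (1 - β) / (c₂ + L / 2)) ∧
       ∀ α : ℝ, 0 < α → (1 - β / 2) / (δprev + L / 2) ≤ α → α ≤ (1 - β) / (c₂ + L / 2) →
         (1 / α - L / 2 - β / (2 * α) ≤ δprev ∧
          c₂ ≤ 1 / α - L / 2 - β / α ∧
          1 / α - L / 2 - β / α ≤ 1 / α - L / 2 - β / (2 * α))) :=
  ipiano_step_size_feasibility_general L c₂ δprev b hL hc₂ hδ hb
end

section
/- Let h = f + g with f ∈ C¹ having L_n-Lipschitz gradient on dom g (so the descent lemma f(x^{n+1}) ≤ f(x^n) + ⟨∇f(x^n), x^{n+1}-x^n⟩ + (L_n/2)‖x^{n+1}-x^n‖² holds) and g proper lsc convex. Suppose (x^n−x^{n+1})/α_n − ∇f(x^n) + (β_n/α_n)(x^n−x^{n-1}) ∈ ∂g(x^{n+1}). Then h(x^{n+1}) + δ_n Δ_{n+1}² ≤ h(x^n) + δ_n Δ_n² − γ_n Δ_n², where Δ_n = ‖x^n − x^{n-1}‖, δ_n = 1/α_n − L_n/2 − β_n/(2α_n),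 and γ_n = 1/α_n − L_n/2 − β_n/α_n. -/
/-! The optimality condition, tested at `z = x^n`, bounds `g(x^{n+1}) - g(x^n)` by an inner
product; adding the descent lemma for `f`, the terms in `∇f(x^n)` cancel and what remains is
`-(1/α_n)Δ_{n+1}² + (L_n/2)Δ_{n+1}² + (β_n/α_n)⟨x^n - x^{n-1}, x^{n+1} - x^n⟩`. Young's inequality
`2⟨a, b⟩ ≤ ‖a‖² + ‖b‖²` on the inertial term gives the claim. -/

open RealInnerProductSpace

theorem EReal.coe_add_add_coe_le_of_forall_real {a b : EReal} {c u v p q : ℝ}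
    (hab : a + c ≤ b) (h : ∀ x y : ℝ, x + c ≤ y → u + x + p ≤ v + y + q) :
    ((u : EReal) + a) + p ≤ ((v : EReal) + b) + q := by
  induction b using EReal.rec with
  | top => simp
  | bot =>
    induction a using EReal.rec with
    | bot => simp
    | coe x => exact absurd hab (by simp [← EReal.coe_add])
    | top => simp at hab
  | coe y =>
    induction a using EReal.rec with
    | bot => simp
    | coe x =>
      norm_cast at hab ⊢
      exact h x y hab
    | top => simp at hab

theorem two_mul_real_inner_le_norm_sq_add_norm_sq {E : Type*} [NormedAddCommGroup E]
    [InnerProductSpace ℝ E] (a b : E) : 2 * ⟪a, b⟫ ≤ ‖a‖ ^ 2 + ‖b‖ ^ 2 := by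
  nlinarith [real_inner_le_norm a b, two_mul_le_add_sq ‖a‖ ‖b‖]

section iPiano

variable {E : Type*} [NormedAddCommGroup E] [InnerProductSpace ℝ E]

theorem ipiano_inner_step_eq (v xm1 x0 x1 : E) (α β : ℝ) :
    ⟪(1 / α) • (x0 - x1) - v + (β / α) • (x0 - xm1), x0 - x1⟫
      = 1 / α * ‖x1 - x0‖ ^ 2 + ⟪v, x1 - x0⟫ - β / α * ⟪x0 - xm1, x1 - x0⟫ := by
  rw [← neg_sub x1 x0]
  generalize x1 - x0 = d
  simp only [inner_add_left, inner_sub_left, inner_neg_right, inner_neg_left,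
    real_inner_smul_left, real_inner_self_eq_norm_sq]
  ring

theorem ipiano_descent_real {v xm1 x0 x1 : E} {L α β fx0 fx1 gx0 gx1 : ℝ}
    (hα : 0 < α) (hβ : 0 ≤ β)
    (hdescent : fx1 ≤ fx0 + ⟪v, x1 - x0⟫ + L / 2 * ‖x1 - x0‖ ^ 2)
    (hsub : gx1 + ⟪(1 / α) • (x0 - x1) - v + (β / α) • (x0 - xm1), x0 - x1⟫ ≤ gx0) :
    fx1 + gx1 + (1 / α - L / 2 - β / (2 * α)) * ‖x1 - x0‖ ^ 2
      ≤ fx0 + gx0 + β / (2 * α) * ‖x0 - xm1‖ ^ 2 := by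
  rw [ipiano_inner_step_eq] at hsub
  have hyoung := mul_le_mul_of_nonneg_left
    (two_mul_real_inner_le_norm_sq_add_norm_sq (x0 - xm1) (x1 - x0)) (div_nonneg hβ hα.le)
  linear_combination hdescent + hsub + hyoung / 2

end iPiano

theorem ipiano_lyapunov_descent_general
    (f : EuclideanSpace ℝ (Fin N) → ℝ)
    (f' : EuclideanSpace ℝ (Fin N) → EuclideanSpace ℝ (Fin N))
    (g : EuclideanSpace ℝ (Fin N) → EReal)
    (Ln αn βn δn γn : ℝ) (hα : 0 < αn) (hβ : 0 ≤ βn)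
    (xm1 x0 x1 : EuclideanSpace ℝ (Fin N))
    -- descent lemma for `f` with constant `L_n` between `x^n` and `x^{n+1}`
    (hdescent : f x1 ≤ f x0 + ⟪f' x0, x1 - x0⟫ + Ln / 2 * ‖x1 - x0‖ ^ 2)
    -- the iPiano optimality condition: the given vector is a convex subgradient of `g` at `x^{n+1}`
    (hsubgrad : ∀ z, g x1 +
        ((⟪(1 / αn) • (x0 - x1) - f' x0 + (βn / αn) • (x0 - xm1), z - x1⟫ : ℝ) : EReal)
        ≤ g z)
    (hδ : δn = 1 / αn - Ln / 2 - βn / (2 * αn))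
    (hγ : γn = 1 / αn - Ln / 2 - βn / αn) :
    ((f x1 : EReal) + g x1) + ((δn * ‖x1 - x0‖ ^ 2 : ℝ) : EReal)
      ≤ ((f x0 : EReal) + g x0)
        + ((δn * ‖x0 - xm1‖ ^ 2 - γn * ‖x0 - xm1‖ ^ 2 : ℝ) : EReal) := by
  refine EReal.coe_add_add_coe_le_of_forall_real (hsubgrad x0) fun r1 r0 hsub => ?_
  subst hδ hγ
  linear_combination ipiano_descent_real hα hβ hdescent hsub

/-- **Key Lyapunov descent inequality for iPiano.** Let `h = f + g` with `f ∈ C¹` whose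
gradient satisfies the descent lemma with constant `L_n`, and `g` proper lsc convex.
If `(x^n - x^{n+1})/α_n - ∇f(x^n) + (β_n/α_n)(x^n - x^{n-1}) ∈ ∂g(x^{n+1})` (convex
subdifferential), then
`h(x^{n+1}) + δ_n Δ_{n+1}² ≤ h(x^n) + δ_n Δ_n² - γ_n Δ_n²`,
where `Δ_n = ‖x^n - x^{n-1}‖`, `δ_n = 1/α_n - L_n/2 - β_n/(2α_n)` and
`γ_n = 1/α_n - L_n/2 - β_n/α_n`. -/
theorem ipiano_lyapunov_descent
    (f : EuclideanSpace ℝ (Fin N) → ℝ)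
    (f' : EuclideanSpace ℝ (Fin N) → EuclideanSpace ℝ (Fin N))
    (hf : ∀ x, HasGradientAt f (f' x) x)
    (g : EuclideanSpace ℝ (Fin N) → EReal)
    (hproper : ∃ z, g z ≠ ⊤) (hnobot : ∀ z, g z ≠ ⊥)
    (hlsc : LowerSemicontinuous g)
    (hconv : ∀ (x y : EuclideanSpace ℝ (Fin N)) (a b : ℝ), 0 ≤ a → 0 ≤ b → a + b = 1 →
      g (a • x + b • y) ≤ (a : EReal) * g x + (b : EReal) * g y)
    (Ln αn βn δn γn : ℝ) (hα : 0 < αn) (hβ : 0 ≤ βn)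
    (xm1 x0 x1 : EuclideanSpace ℝ (Fin N))
    -- descent lemma for `f` with constant `L_n` between `x^n` and `x^{n+1}`
    (hdescent : f x1 ≤ f x0 + ⟪f' x0, x1 - x0⟫ + Ln / 2 * ‖x1 - x0‖ ^ 2)
    -- the iPiano optimality condition: the given vector is a convex subgradient of `g` at `x^{n+1}`
    (hsubgrad : ∀ z, g x1 +
        ((⟪(1 / αn) • (x0 - x1) - f' x0 + (βn / αn) • (x0 - xm1), z - x1⟫ : ℝ) : EReal)
        ≤ g z)
    (hδ : δn = 1 / αn - Ln / 2 - βn / (2 * αn))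
    (hγ : γn = 1 / αn - Ln / 2 - βn / αn) :
    ((f x1 : EReal) + g x1) + ((δn * ‖x1 - x0‖ ^ 2 : ℝ) : EReal)
      ≤ ((f x0 : EReal) + g x0)
        + ((δn * ‖x0 - xm1‖ ^ 2 - γn * ‖x0 - xm1‖ ^ 2 : ℝ) : EReal) :=
  ipiano_lyapunov_descent_general f f' g Ln αn βn δn γn hα hβ xm1 x0 x1 hdescent hsubgrad hδ hγ
end

section
/- Let (x^n) be a sequence in ℝ^N with Δ_n = ‖x^n − x^{n-1}‖, and suppose there exist δ_n ≥ γ_n ≥ c₂ > 0 with δ_n monotonically decreasing such that h(x^{n+1}) + δ_{n+1}Δ_{n+1}² ≤ h(x^n) + δ_n Δ_n² − γ_n Δ_n² for all n ≥ 0, and h is bounded below by h̲ > −∞. Then Σ_{n=0}^∞ Δ_n² < ∞ and consequently Δ_n → 0 as n → ∞. -/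
/-!
Along the iterates the Lyapunov value `V n = h(x^n) + δ_n Δ_n²` is finite (it starts finite and
can only decrease), bounded below by `h̲`, and drops by at least `c₂ Δ_n²` at each step. Hence
the partial sums of `c₂ Δ_n²` telescope to at most `V 0 - h̲`.
-/

open Filter Topology

variable {N : ℕ}

namespace EReal

theorem ne_top_of_add_coe_le_add_coe {a b : EReal} {r s : ℝ} (hb : b ≠ ⊤)
    (h : a + r ≤ b + s) : a ≠ ⊤ := by
  rintro rfl
  rw [top_add_coe, top_le_iff] at h
  exact (add_lt_top hb (coe_ne_top s)).ne h

theorem toReal_add_coe_le_toReal_add_coe {a b : EReal} {r s : ℝ} (ha : a ≠ ⊥) (hb : b ≠ ⊤)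
    (h : a + r ≤ b + s) : a.toReal + r ≤ b.toReal + s := by
  have ha' : a ≠ ⊤ := ne_top_of_add_coe_le_add_coe hb h
  have hb' : b ≠ ⊥ := by
    rintro rfl
    rw [bot_add, le_bot_iff, add_eq_bot_iff] at h
    exact h.elim ha (coe_ne_bot r)
  rw [← coe_toReal ha' ha, ← coe_toReal hb hb', ← coe_add, ← coe_add] at h
  exact_mod_cast h

end EReal

theorem summable_of_le_sub_succ {a V : ℕ → ℝ} {b : ℝ} (ha : ∀ n, 0 ≤ a n)
    (hV : ∀ n, b ≤ V n) (hstep : ∀ n, a n ≤ V n - V (n + 1)) : Summable a := by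
  refine summable_of_sum_range_le ha (c := V 0 - b) fun n => ?_
  calc ∑ k ∈ Finset.range n, a k
      ≤ ∑ k ∈ Finset.range n, (V k - V (k + 1)) := Finset.sum_le_sum fun k _ => hstep k
    _ = V 0 - V n := Finset.sum_range_sub' V n
    _ ≤ V 0 - b := by linarith [hV n]

theorem summable_sq_of_lyapunov_descent {f δ γ Δ : ℕ → ℝ} {c b : ℝ} (hc : 0 < c)
    (hγ : ∀ n, c ≤ γ n) (hδ : ∀ n, 0 ≤ δ n) (hf : ∀ n, b ≤ f n)
    (hstep : ∀ n, f (n + 1) + δ (n + 1) * Δ (n + 1) ^ 2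
      ≤ f n + (δ n * Δ n ^ 2 - γ n * Δ n ^ 2)) :
    Summable fun n => Δ n ^ 2 := by
  set V : ℕ → ℝ := fun n => f n + δ n * Δ n ^ 2
  have hV : ∀ n, b ≤ V n := fun n =>
    (hf n).trans (le_add_of_nonneg_right (mul_nonneg (hδ n) (sq_nonneg _)))
  have hdrop : ∀ n, c * Δ n ^ 2 ≤ V n - V (n + 1) := fun n => by
    have := mul_le_mul_of_nonneg_right (hγ n) (sq_nonneg (Δ n))
    linarith [hstep n]
  exact (summable_mul_left_iff hc.ne').mp <|
    summable_of_le_sub_succ (fun n => mul_nonneg hc.le (sq_nonneg _)) hV hdrop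

theorem tendsto_zero_of_summable_sq {a : ℕ → ℝ} (h : Summable fun n => a n ^ 2) :
    Tendsto a atTop (𝓝 0) := by
  rw [tendsto_zero_iff_abs_tendsto_zero]
  have := (Real.continuous_sqrt.tendsto 0).comp h.tendsto_atTop_zero
  simpa only [Function.comp_def, Real.sqrt_sq_eq_abs, Real.sqrt_zero] using this

theorem ipiano_delta_sq_summable_general
    (h : EuclideanSpace ℝ (Fin N) → EReal)
    (x : ℕ → EuclideanSpace ℝ (Fin N))
    (Δ : ℕ → ℝ)
    (δ γ : ℕ → ℝ) (c₂ : ℝ) (hc₂ : 0 < c₂)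
    (hγ : ∀ n, c₂ ≤ γ n) (hδγ : ∀ n, γ n ≤ δ n)
    (hlb : ℝ) (hbdd : ∀ y, (hlb : EReal) ≤ h y)
    (hdom : h (x 0) ≠ ⊤)
    (hdescent : ∀ n, h (x (n + 1)) + ((δ (n + 1) * Δ (n + 1) ^ 2 : ℝ) : EReal)
        ≤ h (x n) + ((δ n * Δ n ^ 2 - γ n * Δ n ^ 2 : ℝ) : EReal)) :
    Summable (fun n => Δ n ^ 2) ∧ Tendsto Δ atTop (𝓝 0) := by
  have hne_top : ∀ n, h (x n) ≠ ⊤ := by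
    intro n
    induction n with
    | zero => exact hdom
    | succ n ih => exact EReal.ne_top_of_add_coe_le_add_coe ih (hdescent n)
  have hne_bot : ∀ n, h (x n) ≠ ⊥ := fun n => ne_bot_of_le_ne_bot (EReal.coe_ne_bot hlb) (hbdd _)
  have hsummable : Summable fun n => Δ n ^ 2 := by
    refine summable_sq_of_lyapunov_descent (f := fun n => (h (x n)).toReal) (b := hlb) hc₂ hγ
      (fun n => (hc₂.trans_le (hγ n)).le.trans (hδγ n)) (fun n => ?_) (fun n => ?_)
    · simpa using EReal.toReal_le_toReal (hbdd (x n)) (EReal.coe_ne_bot hlb) (hne_top n)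
    · exact EReal.toReal_add_coe_le_toReal_add_coe (hne_bot _) (hne_top n) (hdescent n)
  exact ⟨hsummable, tendsto_zero_of_summable_sq hsummable⟩

/-- **Square-summability of the iterate differences.** If the Lyapunov descent inequality
`h(x^{n+1}) + δ_{n+1}Δ_{n+1}² ≤ h(x^n) + δ_n Δ_n² - γ_n Δ_n²` holds with
`δ_n ≥ γ_n ≥ c₂ > 0`, `δ` monotonically decreasing, and `h` bounded below by `h̲`,
then `∑ Δ_n² < ∞` and `Δ_n → 0`. -/
theorem ipiano_delta_sq_summable
    (h : EuclideanSpace ℝ (Fin N) → EReal)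
    (x : ℕ → EuclideanSpace ℝ (Fin N))
    (Δ : ℕ → ℝ) (hΔ0 : Δ 0 = 0) (hΔ : ∀ n, Δ (n + 1) = ‖x (n + 1) - x n‖)
    (δ γ : ℕ → ℝ) (c₂ : ℝ) (hc₂ : 0 < c₂)
    (hγ : ∀ n, c₂ ≤ γ n) (hδγ : ∀ n, γ n ≤ δ n) (hδmono : Antitone δ)
    (hlb : ℝ) (hbdd : ∀ y, (hlb : EReal) ≤ h y)
    (hdom : h (x 0) ≠ ⊤)
    (hdescent : ∀ n, h (x (n + 1)) + ((δ (n + 1) * Δ (n + 1) ^ 2 : ℝ) : EReal)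
        ≤ h (x n) + ((δ n * Δ n ^ 2 - γ n * Δ n ^ 2 : ℝ) : EReal)) :
    Summable (fun n => Δ n ^ 2) ∧ Tendsto Δ atTop (𝓝 0) :=
  ipiano_delta_sq_summable_general h x Δ δ γ c₂ hc₂ hγ hδγ hlb hbdd hdom hdescent
end

section
/- Let (x^n) be a sequence in ℝ^N satisfying the Lyapunov descent inequality H_{δ_{n+1}}(x^{n+1},x^n) ≤ H_{δ_n}(x^n,x^{n-1}) − γ_n Δ_n² with γ_n ≥ c₂ > 0, δ_n ≥ γ_n, δ_n decreasing, h bounded below, where H_δ(x,y) = h(x) + δ‖x−y‖². Then the sequence of function values (h(x^n)) converges. -/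
/-!
With `H n = h(xⁿ) + δₙ Δₙ²` the descent inequality reads `H (n+1) + γₙ Δₙ² ≤ H n`, so `H` is
antitone and bounded below, hence convergent. Its successive differences then tend to zero and
dominate `c₂ Δₙ²`, so `Δₙ² → 0`; as `δ` is bounded by `δ₀`, also `δₙ Δₙ² → 0`, and
`h(xⁿ) = H n - δₙ Δₙ²` has the same limit as `H`. Finiteness of the values `h(xⁿ)` in `EReal`
propagates along the descent inequality from `h(x⁰) ≠ ⊤`.
-/

open Filter Topology

variable {N : ℕ}

theorem EReal.ne_top_of_add_coe_le_add_coe_s11 {a b : EReal} {r s : ℝ}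
    (hab : a + r ≤ b + s) (hb : b ≠ ⊤) : a ≠ ⊤ := by
  rintro rfl
  rw [EReal.top_add_coe, top_le_iff] at hab
  exact (EReal.add_lt_top hb (EReal.coe_ne_top s)).ne hab

theorem tendsto_zero_of_nonneg_of_le_sub_succ {a e : ℕ → ℝ} {l : ℝ}
    (ha : Tendsto a atTop (𝓝 l)) (he0 : ∀ n, 0 ≤ e n) (he : ∀ n, e n ≤ a n - a (n + 1)) :
    Tendsto e atTop (𝓝 0) := by
  have hdiff : Tendsto (fun n => a n - a (n + 1)) atTop (𝓝 0) := by
    simpa using ha.sub (ha.comp (tendsto_add_atTop_nat 1))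
  exact squeeze_zero he0 he hdiff

theorem exists_tendsto_of_lyapunov_descent {b d δ γ : ℕ → ℝ} {c m : ℝ} (hc : 0 < c)
    (hγ : ∀ n, c ≤ γ n) (hδγ : ∀ n, γ n ≤ δ n) (hδ : Antitone δ) (hb : ∀ n, m ≤ b n)
    (hdesc : ∀ n, b (n + 1) + δ (n + 1) * d (n + 1) ^ 2
      ≤ b n + (δ n * d n ^ 2 - γ n * d n ^ 2)) :
    ∃ l, Tendsto b atTop (𝓝 l) := by
  set H : ℕ → ℝ := fun n => b n + δ n * d n ^ 2 with hH
  have hδ0 : ∀ n, 0 ≤ δ n := fun n => hc.le.trans ((hγ n).trans (hδγ n))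
  have hcd : ∀ n, 0 ≤ c * d n ^ 2 := fun n => by positivity
  have hstep : ∀ n, c * d n ^ 2 ≤ H n - H (n + 1) := fun n => by
    have := mul_le_mul_of_nonneg_right (hγ n) (sq_nonneg (d n))
    linarith [hdesc n]
  have hH_anti : Antitone H := antitone_nat_of_succ_le fun n => by linarith [hstep n, hcd n]
  have hH_bdd : BddBelow (Set.range H) := ⟨m, by
    rintro _ ⟨n, rfl⟩
    linarith [hb n, mul_nonneg (hδ0 n) (sq_nonneg (d n))]⟩
  have hH_lim : Tendsto H atTop (𝓝 (⨅ n, H n)) := tendsto_atTop_ciInf hH_anti hH_bdd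
  have hd : Tendsto (fun n => d n ^ 2) atTop (𝓝 0) := by
    simpa [hc.ne'] using
      (tendsto_zero_of_nonneg_of_le_sub_succ hH_lim hcd hstep).div_const c
  have hδd : Tendsto (fun n => δ n * d n ^ 2) atTop (𝓝 0) := by
    refine squeeze_zero (fun n => mul_nonneg (hδ0 n) (sq_nonneg (d n)))
      (fun n => mul_le_mul_of_nonneg_right (hδ (Nat.zero_le n)) (sq_nonneg (d n))) ?_
    simpa using hd.const_mul (δ 0)
  exact ⟨⨅ n, H n, by simpa [hH] using hH_lim.sub hδd⟩

theorem ipiano_function_values_converge_general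
    (h : EuclideanSpace ℝ (Fin N) → EReal)
    (x : ℕ → EuclideanSpace ℝ (Fin N))
    (Δ : ℕ → ℝ)
    (δ γ : ℕ → ℝ) (c₂ : ℝ) (hc₂ : 0 < c₂)
    (hγ : ∀ n, c₂ ≤ γ n) (hδγ : ∀ n, γ n ≤ δ n) (hδmono : Antitone δ)
    (hlb : ℝ) (hbdd : ∀ y, (hlb : EReal) ≤ h y)
    (hdom : h (x 0) ≠ ⊤)
    (hdescent : ∀ n, h (x (n + 1)) + ((δ (n + 1) * Δ (n + 1) ^ 2 : ℝ) : EReal)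
        ≤ h (x n) + ((δ n * Δ n ^ 2 - γ n * Δ n ^ 2 : ℝ) : EReal)) :
    ∃ l : ℝ, Tendsto (fun n => h (x n)) atTop (𝓝 (l : EReal)) := by
  have hbot (n : ℕ) : h (x n) ≠ ⊥ := ne_bot_of_le_ne_bot (EReal.coe_ne_bot hlb) (hbdd (x n))
  have htop (n : ℕ) : h (x n) ≠ ⊤ := by
    induction n with
    | zero => exact hdom
    | succ n ih => exact EReal.ne_top_of_add_coe_le_add_coe_s11 (hdescent n) ih
  have hcoe (n : ℕ) : h (x n) = ((h (x n)).toReal : EReal) :=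
    (EReal.coe_toReal (htop n) (hbot n)).symm
  obtain ⟨l, hl⟩ := exists_tendsto_of_lyapunov_descent (b := fun n => (h (x n)).toReal)
    hc₂ hγ hδγ hδmono (m := hlb)
    (fun n => EReal.coe_le_coe_iff.mp (hcoe n ▸ hbdd (x n)))
    (fun n => by
      have := hdescent n
      rw [hcoe n, hcoe (n + 1)] at this
      exact_mod_cast this)
  exact ⟨l, by simpa only [← hcoe] using EReal.tendsto_coe.2 hl⟩

/-- **Convergence of the function values.** Under the iPiano Lyapunov descent inequality
with `γ_n ≥ c₂ > 0`, `δ_n ≥ γ_n`, `δ` decreasing, and `h` bounded below, the sequence of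
function values `(h(x^n))` converges. -/
theorem ipiano_function_values_converge
    (h : EuclideanSpace ℝ (Fin N) → EReal)
    (x : ℕ → EuclideanSpace ℝ (Fin N))
    (Δ : ℕ → ℝ) (hΔ0 : Δ 0 = 0) (hΔ : ∀ n, Δ (n + 1) = ‖x (n + 1) - x n‖)
    (δ γ : ℕ → ℝ) (c₂ : ℝ) (hc₂ : 0 < c₂)
    (hγ : ∀ n, c₂ ≤ γ n) (hδγ : ∀ n, γ n ≤ δ n) (hδmono : Antitone δ)
    (hlb : ℝ) (hbdd : ∀ y, (hlb : EReal) ≤ h y)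
    (hdom : h (x 0) ≠ ⊤)
    (hdescent : ∀ n, h (x (n + 1)) + ((δ (n + 1) * Δ (n + 1) ^ 2 : ℝ) : EReal)
        ≤ h (x n) + ((δ n * Δ n ^ 2 - γ n * Δ n ^ 2 : ℝ) : EReal)) :
    ∃ l : ℝ, Tendsto (fun n => h (x n)) atTop (𝓝 (l : EReal)) :=
  ipiano_function_values_converge_general h x Δ δ γ c₂ hc₂ hγ hδγ hδmono hlb hbdd hdom hdescent
end
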